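/- Let (X_n)_{n∈ω} be an increasing sequence of locally convex topological vector spaces over ℝ (or ℂ) in which each X_n is a linear subspace of X_{n+1} carrying the subspace topology, and each X_n carries the uniformity of its additive topological group. Then the uniform direct limit u-lim X_n is a locally convex topological vector space; consequently its topology is the strongest topology on X = ⋃_n X_n turning X into a locally convex topological vector space and making all inclusions X_n → X continuous, i.e., the identity map u-lim X_n → lc-lim X_n is a homeomorphism. -/

import Mathlib

open Set Filter Topology

universe u

/-- The uniform direct limit uniformity of an increasing sequence of uniform subspaces of `E`:
the strongest (finest) uniformity on `E` making all inclusions uniformly continuous. -/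
noncomputable def uDirLim {E : Type u} (S : ℕ → Set E)
    (u : (n : ℕ) → UniformSpace (S n)) : UniformSpace E :=
  sInf {u' : UniformSpace E |
    ∀ n, @UniformContinuous _ _ (u n) u' (Subtype.val : S n → E)}

/-!
Any group topology `t'` on `X` making the inclusions continuous comes with a translation-invariant
uniformity making them uniformly continuous, so the topology of `u-lim X_n` is finer than `t'`;
in particular it is finer than that of `lc-lim X_n`, whose `0`-neighbourhood base consists of the
absolutely convex sets with `0`-neighbourhood traces on every `X_n`.

Conversely, let `x ∈ X_N` and let `V` be an entourage of a uniformity making every inclusion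
uniformly continuous. Pick entourages `V = V₀` and `V_{k+1} ○ V_{k+1} ⊆ V_k`, and absolutely
convex `0`-neighbourhoods `D_k` of `X_{N+k}` with `(z, z + d) ∈ V_{k+1}` for `z ∈ X_{N+k}`,
`d ∈ D_k`. Then `W = ⋃ₘ (D₀ + ⋯ + D_{m-1})` is a `0`-neighbourhood of `lc-lim X_n`, and
telescoping along `x, x + d₀, x + d₀ + d₁, …` shows `(x, x + w) ∈ V` for all `w ∈ W`.
-/

open scoped Pointwise Uniformity SetRel

theorem eq_rightUniformSpace_of_hasBasis {G : Type*} [AddCommGroup G] [TopologicalSpace G]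
    [IsTopologicalAddGroup G] {u : UniformSpace G}
    (h : (@uniformity G u).HasBasis (fun U : Set G => U ∈ 𝓝 0) fun U => {p | p.1 - p.2 ∈ U}) :
    u = IsTopologicalAddGroup.rightUniformSpace G := by
  let := IsTopologicalAddGroup.rightUniformSpace G
  have := isUniformAddGroup_of_addCommGroup (G := G)
  ext : 1
  exact h.eq_of_same_basis
    (uniformity_eq_comap_nhds_zero_swapped G ▸ (𝓝 0).basis_sets.comap _)

theorem uDirLim_le_rightUniformSpace {E : Type u} [AddCommGroup E] [TopologicalSpace E]
    [IsTopologicalAddGroup E] {M : Type*} [SetLike M E] [AddSubgroupClass M E] {S : ℕ → M}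
    [∀ n, TopologicalSpace (S n)] [∀ n, IsTopologicalAddGroup (S n)]
    (hS : ∀ n, Continuous ((↑) : S n → E)) :
    uDirLim (fun n => (S n : Set E)) (fun n => IsTopologicalAddGroup.rightUniformSpace (S n)) ≤
      IsTopologicalAddGroup.rightUniformSpace E := by
  refine sInf_le fun n => ?_
  let := IsTopologicalAddGroup.rightUniformSpace (S n)
  let := IsTopologicalAddGroup.rightUniformSpace E
  have := isUniformAddGroup_of_addCommGroup (G := S n)
  have := isUniformAddGroup_of_addCommGroup (G := E)
  exact uniformContinuous_addMonoidHom_of_continuous (f := AddSubgroupClass.subtype (S n)) (hS n)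

section LcDirLim

variable {ι E : Type*} [AddCommGroup E] [Module ℝ E] (S : ι → Submodule ℝ E)
  [∀ i, TopologicalSpace (S i)]

def lcDirLimSets : Set (Set E) :=
  {W | AbsConvex ℝ W ∧ ∀ i, ((↑) : S i → E) ⁻¹' W ∈ 𝓝 0}

variable {S}

theorem inter_mem_lcDirLimSets {U V : Set E} (hU : U ∈ lcDirLimSets S)
    (hV : V ∈ lcDirLimSets S) : U ∩ V ∈ lcDirLimSets S :=
  ⟨hU.1.inter hV.1, fun i => inter_mem (hU.2 i) (hV.2 i)⟩

theorem smul_mem_lcDirLimSets [∀ i, ContinuousConstSMul ℝ (S i)] {U : Set E}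
    (hU : U ∈ lcDirLimSets S) {c : ℝ} (hc : c ≠ 0) : c • U ∈ lcDirLimSets S := by
  refine ⟨⟨hU.1.1.smul c, hU.1.2.smul c⟩, fun i => ?_⟩
  have : ((↑) : S i → E) ⁻¹' (c • U) = c • ((↑) : S i → E) ⁻¹' U := by
    ext x
    simp only [mem_preimage, mem_smul_set_iff_inv_smul_mem₀ hc, Submodule.coe_smul]
  rw [this, set_smul_mem_nhds_zero_iff hc]
  exact hU.2 i

theorem zero_mem_of_mem_lcDirLimSets [Nonempty ι] {U : Set E} (hU : U ∈ lcDirLimSets S) :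
    (0 : E) ∈ U := by
  simpa using mem_of_mem_nhds (hU.2 (Classical.arbitrary ι))

variable [∀ i, ContinuousSMul ℝ (S i)] (hS : ∀ x, ∃ i, x ∈ S i)

def lcDirLimBasis : ModuleFilterBasis ℝ E where
  sets := lcDirLimSets S
  nonempty := ⟨univ, AbsConvex.univ, fun _ => univ_mem⟩
  inter_sets hU hV := ⟨_, inter_mem_lcDirLimSets hU hV, subset_rfl⟩
  zero' hU := have : Nonempty ι := ⟨(hS 0).choose⟩; zero_mem_of_mem_lcDirLimSets hU
  add' {U} hU := by
    refine ⟨(2⁻¹ : ℝ) • U, smul_mem_lcDirLimSets hU (by norm_num), ?_⟩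
    rw [← hU.1.2.add_smul (by norm_num) (by norm_num)]
    norm_num
  neg' {U} hU := ⟨U, hU, fun _ hx => hU.1.1.neg_mem_iff.2 hx⟩
  conj' _ {U} hU := ⟨U, hU, by simp⟩
  smul' {U} hU :=
    ⟨_, Metric.closedBall_mem_nhds 0 one_pos, U, hU, balanced_iff_closedBall_smul.1 hU.1.1⟩
  smul_left' c {U} hU := by
    rcases eq_or_ne c 0 with rfl | hc
    · have : Nonempty ι := ⟨(hS 0).choose⟩
      exact ⟨U, hU, fun x _ => by simpa using zero_mem_of_mem_lcDirLimSets hU⟩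
    · refine ⟨c⁻¹ • U, smul_mem_lcDirLimSets hU (inv_ne_zero hc), fun x hx => ?_⟩
      simpa [mem_smul_set_iff_inv_smul_mem₀ (inv_ne_zero hc)] using hx
  smul_right' x {U} hU := by
    obtain ⟨i, hx⟩ := hS x
    have : Tendsto (fun c : ℝ => c • (⟨x, hx⟩ : S i)) (𝓝 0) (𝓝 0) :=
      (continuous_id.smul continuous_const).tendsto' 0 0 (zero_smul ℝ _)
    exact this (hU.2 i)

abbrev lcDirLim : TopologicalSpace E := (lcDirLimBasis hS).topology

theorem isTopologicalAddGroup_lcDirLim : @IsTopologicalAddGroup E (lcDirLim hS) _ :=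
  (lcDirLimBasis hS).toAddGroupFilterBasis.isTopologicalAddGroup

theorem continuousSMul_lcDirLim : @ContinuousSMul ℝ E _ _ (lcDirLim hS) :=
  (lcDirLimBasis hS).continuousSMul

theorem locallyConvexSpace_lcDirLim : @LocallyConvexSpace ℝ E _ _ _ _ (lcDirLim hS) :=
  let _ := lcDirLim hS
  have := isTopologicalAddGroup_lcDirLim hS
  .ofBasisZero ℝ E _ _ (lcDirLimBasis hS).toAddGroupFilterBasis.nhds_zero_hasBasis
    fun _ hW => hW.1.2

theorem continuous_subtype_val_lcDirLim [∀ i, IsTopologicalAddGroup (S i)] (i : ι) :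
    Continuous[_, lcDirLim hS] ((↑) : S i → E) := by
  let _ := lcDirLim hS
  have := isTopologicalAddGroup_lcDirLim hS
  refine continuous_of_continuousAt_zero (S i).subtype.toAddMonoidHom ?_
  rw [ContinuousAt, map_zero]
  exact (lcDirLimBasis hS).toAddGroupFilterBasis.nhds_zero_hasBasis.tendsto_right_iff.2
    fun W hW => hW.2 i

end LcDirLim

theorem zero_mem_sum_range {E : Type*} [AddCommMonoid E] {g : ℕ → Set E}
    (hg : ∀ k, (0 : E) ∈ g k) (m : ℕ) :
    (0 : E) ∈ ∑ j ∈ Finset.range m, g j :=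
  Finset.sum_induction _ (fun s : Set E => (0 : E) ∈ s)
    (fun _ _ hs ht => by simpa using add_mem_add hs ht) Set.zero_mem_zero fun k _ => hg k

theorem subset_iUnion_sum_range {E : Type*} [AddCommMonoid E] {g : ℕ → Set E}
    (hg : ∀ k, (0 : E) ∈ g k) (n : ℕ) :
    g n ⊆ ⋃ m, ∑ j ∈ Finset.range m, g j := by
  refine Subset.trans ?_ (subset_iUnion _ (n + 1))
  rw [Finset.sum_range_succ]
  exact subset_add_right _ (zero_mem_sum_range hg n)

theorem absConvex_iUnion_sum_range {E : Type*} [AddCommGroup E] [Module ℝ E] {g : ℕ → Set E}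
    (hg : ∀ k, AbsConvex ℝ (g k)) (hg₀ : ∀ k, (0 : E) ∈ g k) :
    AbsConvex ℝ (⋃ m, ∑ j ∈ Finset.range m, g j) := by
  have hsum : ∀ m, AbsConvex ℝ (∑ j ∈ Finset.range m, g j) := fun m =>
    Finset.sum_induction _ (AbsConvex ℝ) (fun _ _ hs ht => ⟨hs.1.add ht.1, hs.2.add ht.2⟩)
      ⟨balanced_zero, convex_zero⟩ fun k _ => hg k
  have hmono : Monotone fun m => ∑ j ∈ Finset.range m, g j :=
    monotone_nat_of_le_succ fun m => by
      rw [Finset.sum_range_succ]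
      exact subset_add_left _ (hg₀ m)
  exact ⟨balanced_iUnion fun m => (hsum m).1,
    hmono.directed_le.convex_iUnion fun m => (hsum m).2⟩

theorem exists_seq_mem_uniformity_comp_subset {α : Type*} [UniformSpace α] {V : SetRel α α}
    (hV : V ∈ 𝓤 α) :
    ∃ W : ℕ → SetRel α α, W 0 = V ∧ (∀ k, W k ∈ 𝓤 α) ∧ ∀ k, W (k + 1) ○ W (k + 1) ⊆ W k := by
  choose half half_mem half_comp using fun U : {U // U ∈ 𝓤 α} => comp_mem_uniformity_sets U.2
  let W : ℕ → {U // U ∈ 𝓤 α} := fun k => Nat.rec ⟨V, hV⟩ (fun _ U => ⟨half U, half_mem U⟩) k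
  exact ⟨fun k => (W k).1, rfl, fun k => (W k).2, fun k => half_comp (W k)⟩

theorem pair_add_mem_of_mem_sum_range {E : Type*} [AddCommMonoid E] [UniformSpace E]
    {A g : ℕ → Set E} {V : ℕ → SetRel E E} (hV : ∀ k, V k ∈ 𝓤 E)
    (hV_comp : ∀ k, V (k + 1) ○ V (k + 1) ⊆ V k)
    (hA : ∀ k, ∀ z ∈ A k, ∀ d ∈ g k, z + d ∈ A (k + 1))
    (hg : ∀ k, ∀ z ∈ A k, ∀ d ∈ g k, (z, z + d) ∈ V (k + 1)) (m : ℕ) :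
    ∀ k, ∀ z ∈ A k, ∀ w ∈ ∑ j ∈ Finset.range m, g (k + j), (z, z + w) ∈ V k := by
  induction m with
  | zero =>
    rintro k z - w rfl
    simpa using refl_mem_uniformity (hV k)
  | succ m ih =>
    intro k z hz w hw
    have hsplit : ∑ j ∈ Finset.range (m + 1), g (k + j) =
        g k + ∑ j ∈ Finset.range m, g (k + 1 + j) := by
      rw [Finset.sum_range_succ', add_comm]
      simp only [add_zero, add_assoc, add_comm 1]
    rw [hsplit] at hw
    obtain ⟨d, hd, w', hw', rfl⟩ := hw
    rw [← add_assoc]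
    exact hV_comp k ⟨z + d, hg k z hz d hd, ih (k + 1) (z + d) (hA k z hz d hd) w' hw'⟩

theorem exists_absConvex_mem_nhds_zero_of_uniformContinuous {F : Type*} [AddCommGroup F]
    [Module ℝ F] [TopologicalSpace F] [IsTopologicalAddGroup F] [ContinuousSMul ℝ F]
    [LocallyConvexSpace ℝ F] {α : Type*} [UniformSpace α] {f : F → α}
    (hf : @UniformContinuous _ _ (IsTopologicalAddGroup.rightUniformSpace F) _ f)
    {V : SetRel α α} (hV : V ∈ 𝓤 α) :
    ∃ D ∈ 𝓝 (0 : F), AbsConvex ℝ D ∧ ∀ a b, b - a ∈ D → (f a, f b) ∈ V := by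
  let _ := IsTopologicalAddGroup.rightUniformSpace F
  have := isUniformAddGroup_of_addCommGroup (G := F)
  obtain ⟨U, hU, hUV⟩ := mem_comap.1 (uniformity_eq_comap_nhds_zero F ▸ hf hV)
  obtain ⟨D, ⟨hD, hD_abs⟩, hDU⟩ := (nhds_hasBasis_absConvex ℝ F).mem_iff.1 hU
  exact ⟨D, hD, hD_abs, fun a b hab => @hUV (a, b) (hDU hab)⟩

theorem Submodule.continuous_inclusion_of_le {R M : Type*} [Semiring R] [AddCommMonoid M]
    [Module R M] {S : ℕ → Submodule R M} [∀ n, TopologicalSpace (S n)] (mono : Monotone S)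
    (h : ∀ n, Continuous (Submodule.inclusion (mono (Nat.le_succ n)))) {m n : ℕ} (hmn : m ≤ n) :
    Continuous (Submodule.inclusion (mono hmn)) := by
  induction n, hmn using Nat.le_induction with
  | base => exact continuous_id
  | succ n _ ih => exact (h n).comp ih

section UniformDirectLimit

variable {E : Type u} [AddCommGroup E] [Module ℝ E] {S : ℕ → Submodule ℝ E}
  [∀ n, TopologicalSpace (S n)] [∀ n, IsTopologicalAddGroup (S n)]
  [∀ n, ContinuousSMul ℝ (S n)] [∀ n, LocallyConvexSpace ℝ (S n)] (mono : Monotone S)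
  (hincl : ∀ n, Continuous (Submodule.inclusion (mono (Nat.le_succ n))))

include hincl in
theorem exists_mem_lcDirLimSets_forall_add_mem {u' : UniformSpace E}
    (hu' : ∀ n, @UniformContinuous _ _ (IsTopologicalAddGroup.rightUniformSpace (S n)) u'
      ((↑) : S n → E))
    {N : ℕ} {x : E} (hx : x ∈ S N) {V : SetRel E E} (hV : V ∈ 𝓤 E) :
    ∃ W ∈ lcDirLimSets S, ∀ w ∈ W, (x, x + w) ∈ V := by
  obtain ⟨V, rfl, hV_mem, hV_comp⟩ := exists_seq_mem_uniformity_comp_subset hV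
  choose D hD hD_abs hDV using fun k =>
    exists_absConvex_mem_nhds_zero_of_uniformContinuous (hu' (N + k)) (hV_mem (k + 1))
  set g : ℕ → Set E := fun k => (S (N + k)).subtype '' D k
  have hg_zero : ∀ k, (0 : E) ∈ g k := fun k => ⟨0, mem_of_mem_nhds (hD k), rfl⟩
  have hg_abs : ∀ k, AbsConvex ℝ (g k) := fun k =>
    ⟨fun a ha => by
      rw [← image_smul_set (S (N + k)).subtype]
      exact image_mono ((hD_abs k).1 a ha),
    (hD_abs k).2.linear_image (S (N + k)).subtype⟩
  have hseries := pair_add_mem_of_mem_sum_range (A := fun k => S (N + k)) (g := g)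
    hV_mem hV_comp
    (fun k z hz => by
      rintro _ ⟨d, -, rfl⟩
      exact mono (Nat.le_succ _) ((S (N + k)).add_mem hz d.2))
    (fun k z hz => by
      rintro _ ⟨d, hd, rfl⟩
      simpa using hDV k ⟨z, hz⟩ (⟨z, hz⟩ + d) (by simpa using hd))
  refine ⟨⋃ m, ∑ j ∈ Finset.range m, g j,
    ⟨absConvex_iUnion_sum_range hg_abs hg_zero, fun n => ?_⟩, fun w hw => ?_⟩
  · have hD_trace := (Submodule.continuous_inclusion_of_le mono hincl
      (Nat.le_add_left n N)).tendsto' 0 0 (map_zero _) (hD n)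
    exact mem_of_superset hD_trace fun y hy => subset_iUnion_sum_range hg_zero n ⟨_, hy, rfl⟩
  · obtain ⟨m, hm⟩ := mem_iUnion.1 hw
    exact hseries m 0 x hx w (by simpa using hm)

include hincl in
theorem lcDirLim_le_uDirLim (hS : ∀ x, ∃ n, x ∈ S n) :
    lcDirLim hS ≤ (uDirLim (fun n => (S n : Set E))
      fun n => IsTopologicalAddGroup.rightUniformSpace (S n)).toTopologicalSpace := by
  rw [uDirLim, UniformSpace.toTopologicalSpace_sInf]
  refine le_iInf₂ fun u' hu' => (le_iff_nhds _ _).2 fun x => ?_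
  refine (nhds_basis_uniformity' (𝓤 E).basis_sets).ge_iff.2 fun V hV => ?_
  obtain ⟨N, hx⟩ := hS x
  obtain ⟨W, hW, hWV⟩ := exists_mem_lcDirLimSets_forall_add_mem mono hincl hu' hx hV
  refine mem_of_superset
    (((lcDirLimBasis hS).toAddGroupFilterBasis.nhds_hasBasis x).mem_of_mem hW) ?_
  rintro _ ⟨w, hw, rfl⟩
  exact hWV w hw

end UniformDirectLimit

theorem statement13_general {E : Type u} [AddCommGroup E] [Module ℝ E]
    (S : ℕ → Submodule ℝ E) (mono : Monotone S) (hunion : ∀ x : E, ∃ n, x ∈ S n)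
    (t : (n : ℕ) → TopologicalSpace (S n))
    (htag : ∀ n, @IsTopologicalAddGroup (S n) (t n) _)
    (hsmul : ∀ n, @ContinuousSMul ℝ (S n) _ _ (t n))
    (hlcs : ∀ n, @LocallyConvexSpace ℝ (S n) _ _ _ _ (t n))
    (hcompat_t : ∀ n, t n =
      TopologicalSpace.induced (⇑(Submodule.inclusion (mono (Nat.le_succ n)))) (t (n + 1)))
    (u : (n : ℕ) → UniformSpace (S n))
    (hbasis : ∀ n, (@uniformity _ (u n)).HasBasis
      (fun U : Set (S n) => U ∈ @nhds _ (t n) (0 : S n))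
      (fun U => {p : S n × S n | p.1 - p.2 ∈ U})) :
    @IsTopologicalAddGroup E
        (uDirLim (fun n => (S n : Set E)) u).toTopologicalSpace _ ∧
      @ContinuousSMul ℝ E _ _
        (uDirLim (fun n => (S n : Set E)) u).toTopologicalSpace ∧
      @LocallyConvexSpace ℝ E _ _ _ _
        (uDirLim (fun n => (S n : Set E)) u).toTopologicalSpace ∧
      (∀ n, @Continuous _ _ (t n)
        (uDirLim (fun n => (S n : Set E)) u).toTopologicalSpace
        (fun x : S n => (x : E))) ∧
      ∀ t' : TopologicalSpace E, @IsTopologicalAddGroup E t' _ →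
        @ContinuousSMul ℝ E _ _ t' →
        @LocallyConvexSpace ℝ E _ _ _ _ t' →
        (∀ n, @Continuous _ _ (t n) t' (fun x : S n => (x : E))) →
        (uDirLim (fun n => (S n : Set E)) u).toTopologicalSpace ≤ t' := by
  obtain rfl : u = fun n => IsTopologicalAddGroup.rightUniformSpace (S n) :=
    funext fun n => eq_rightUniformSpace_of_hasBasis (hbasis n)
  have hmax : ∀ t' : TopologicalSpace E, @IsTopologicalAddGroup E t' _ →
      (∀ n, Continuous[_, t'] ((↑) : S n → E)) →
      (uDirLim (fun n => (S n : Set E)) _).toTopologicalSpace ≤ t' := fun _ _ h =>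
    UniformSpace.toTopologicalSpace_mono (uDirLim_le_rightUniformSpace h)
  have hincl : ∀ n, Continuous (Submodule.inclusion (mono (Nat.le_succ n))) := fun n =>
    continuous_iff_le_induced.2 (hcompat_t n).le
  have heq : (uDirLim (fun n => (S n : Set E)) _).toTopologicalSpace = lcDirLim hunion :=
    le_antisymm
      (hmax _ (isTopologicalAddGroup_lcDirLim hunion) (continuous_subtype_val_lcDirLim hunion))
      (lcDirLim_le_uDirLim mono hincl hunion)
  rw [heq]
  exact ⟨isTopologicalAddGroup_lcDirLim hunion, continuousSMul_lcDirLim hunion,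
    locallyConvexSpace_lcDirLim hunion, continuous_subtype_val_lcDirLim hunion,
    fun t' htag' _ _ h => heq ▸ hmax t' htag' h⟩

/-- Let `(X_n)` be an increasing sequence of linear subspaces of a real vector space `E` with
union `E`, each carrying a locally convex vector topology making it a topological linear
subspace of the next one, and each carrying the uniformity of its additive topological group
(with basic entourages `{(x,y) : x - y ∈ U}`, `U` a neighborhood of `0`).  Then the uniform
direct limit `u-lim X_n`, i.e. `E` with the topology induced by the direct limit uniformity,
is a locally convex topological vector space; moreover this topology makes all inclusions
`X_n → E` continuous and is the strongest (finest) topology turning `E` into a locally convex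
topological vector space and making all inclusions continuous, i.e. the identity map
`u-lim X_n → lc-lim X_n` is a homeomorphism. -/
theorem statement13 {E : Type u} [AddCommGroup E] [Module ℝ E]
    (S : ℕ → Submodule ℝ E) (mono : Monotone S) (hunion : ∀ x : E, ∃ n, x ∈ S n)
    (t : (n : ℕ) → TopologicalSpace (S n))
    (htag : ∀ n, @IsTopologicalAddGroup (S n) (t n) _)
    (hsmul : ∀ n, @ContinuousSMul ℝ (S n) _ _ (t n))
    (hlcs : ∀ n, @LocallyConvexSpace ℝ (S n) _ _ _ _ (t n))
    (hcompat_t : ∀ n, t n =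
      TopologicalSpace.induced (⇑(Submodule.inclusion (mono (Nat.le_succ n)))) (t (n + 1)))
    (u : (n : ℕ) → UniformSpace (S n))
    (htop : ∀ n, (u n).toTopologicalSpace = t n)
    (hbasis : ∀ n, (@uniformity _ (u n)).HasBasis
      (fun U : Set (S n) => U ∈ @nhds _ (t n) (0 : S n))
      (fun U => {p : S n × S n | p.1 - p.2 ∈ U}))
    (hcompat_u : ∀ n, u n =
      UniformSpace.comap (⇑(Submodule.inclusion (mono (Nat.le_succ n)))) (u (n + 1))) :
    @IsTopologicalAddGroup E
        (uDirLim (fun n => (S n : Set E)) u).toTopologicalSpace _ ∧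
      @ContinuousSMul ℝ E _ _
        (uDirLim (fun n => (S n : Set E)) u).toTopologicalSpace ∧
      @LocallyConvexSpace ℝ E _ _ _ _
        (uDirLim (fun n => (S n : Set E)) u).toTopologicalSpace ∧
      (∀ n, @Continuous _ _ (t n)
        (uDirLim (fun n => (S n : Set E)) u).toTopologicalSpace
        (fun x : S n => (x : E))) ∧
      ∀ t' : TopologicalSpace E, @IsTopologicalAddGroup E t' _ →
        @ContinuousSMul ℝ E _ _ t' →
        @LocallyConvexSpace ℝ E _ _ _ _ t' →
        (∀ n, @Continuous _ _ (t n) t' (fun x : S n => (x : E))) →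
        (uDirLim (fun n => (S n : Set E)) u).toTopologicalSpace ≤ t' :=
  statement13_general S mono hunion t htag hsmul hlcs hcompat_t u hbasis
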